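/- arXiv:2412.08039 — 2 statements merged into one kernel-verified Lean document; each statement's English description precedes it below -/
import Mathlib

section
/- Let φ(z) = d(z,0)^{-b} for a real number b, where d is the Grushin distance. Then on the set where x ≠ 0 (so that d(z,0) > 0), the Grushin Laplacian satisfies Δ_γ φ(z) = b(b - N_γ + 2) · (1/(1+γ)²) · |x|^{2γ} · d(z,0)^{-b-2-2γ}, where N_γ = N + (1+γ)l. -/
open MeasureTheory Filter

abbrev GSp (N l : ℕ) := (Fin N → ℝ) × (Fin l → ℝ)

/-- Euclidean norm on `Fin n → ℝ`. -/
noncomputable def xnorm {n : ℕ} (x : Fin n → ℝ) : ℝ := Real.sqrt (∑ i, x i ^ 2)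

/-- The Grushin (quasi-)distance to the origin. -/
noncomputable def gdist {N l : ℕ} (γ : ℝ) (z : GSp N l) : ℝ :=
  ((1 / (1 + γ) ^ 2) * xnorm z.1 ^ (2 + 2 * γ) + xnorm z.2 ^ 2) ^ (1 / (2 + 2 * γ))

/-- Second derivative of `u` at `z` in direction `v`. -/
noncomputable def deriv2 {N l : ℕ} (u : GSp N l → ℝ) (z v : GSp N l) : ℝ :=
  iteratedFDeriv ℝ 2 u z ![v, v]

/-- The Grushin operator `Δ_γ u = Δ_x u + |x|^{2γ} Δ_y u`. -/
noncomputable def grushin {N l : ℕ} (γ : ℝ) (u : GSp N l → ℝ) (z : GSp N l) : ℝ :=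
  (∑ i, deriv2 u z (Pi.single i 1, 0)) +
    xnorm z.1 ^ (2 * γ) * ∑ j, deriv2 u z (0, Pi.single j 1)

/-- The homogeneous dimension `N_γ = N + (1+γ)l`. -/
noncomputable def Ngamma (N l : ℕ) (γ : ℝ) : ℝ := N + (1 + γ) * l

/-- The Grushin Kelvin inversion `z ↦ (d(z,0)^{-2} x, d(z,0)^{-2-2γ} y)`. -/
noncomputable def kelvin {N l : ℕ} (γ : ℝ) (z : GSp N l) : GSp N l :=
  (gdist γ z ^ (-2 : ℝ) • z.1, gdist γ z ^ (-(2 + 2 * γ)) • z.2)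

/-- Membership in the weighted Sobolev space `H^{1,2}_γ` over a set `S`. -/
def MemHgammaOn {N l : ℕ} (γ : ℝ) (u : GSp N l → ℝ) (S : Set (GSp N l)) : Prop :=
  MemLp u 2 (volume.restrict S) ∧
  (∀ i : Fin N, MemLp (fun z => fderiv ℝ u z (Pi.single i 1, 0)) 2 (volume.restrict S)) ∧
  (∀ j : Fin l, MemLp (fun z => xnorm z.1 ^ γ * fderiv ℝ u z (0, Pi.single j 1)) 2
    (volume.restrict S))

/-- Membership in the weighted Sobolev space `H^{1,2}_γ(ℝ^{N+l})`. -/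
def MemHgamma {N l : ℕ} (γ : ℝ) (u : GSp N l → ℝ) : Prop :=
  MemHgammaOn γ u Set.univ

/-!
`d(z,0)^{-b}` depends on `z` only through `s = |x|²` and `t = |y|²`: it is `G^q` with
`G = s^{1+γ}/(1+γ)² + t` and `q = -b/(2+2γ)`. Along a coordinate line the second derivative is a
one-variable second-order chain rule, so the Laplacian in `x ∈ ℝⁿ` of `g(|x|²)` is
`4 s g''(s) + 2 n g'(s)`. In `Δ_γ φ` the `q (q-1)` terms of the `x`-Laplacian and of the
`|x|^{2γ}`-weighted `y`-Laplacian add up to `4 q (q-1) s^γ G^{q-1}`, a multiple of `G` itself,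
because the weight `|x|^{2γ}` matches the exponent `2+2γ` of the distance.
-/

open scoped Topology

theorem iteratedFDeriv_two_apply_self_eq_deriv_deriv {E F : Type*} [NormedAddCommGroup E]
    [NormedSpace ℝ E] [NormedAddCommGroup F] [NormedSpace ℝ F] {u : E → F} {z : E}
    (hu : ContDiffAt ℝ 2 u z) (v : E) :
    iteratedFDeriv ℝ 2 u z ![v, v] = deriv (deriv fun t : ℝ => u (z + t • v)) 0 := by
  have hline : Tendsto (fun t : ℝ => z + t • v) (𝓝 0) (𝓝 z) :=
    Continuous.tendsto' (by fun_prop) 0 z (by simp)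
  have hderiv : deriv (fun t : ℝ => u (z + t • v)) =ᶠ[𝓝 0]
      fun t => iteratedFDeriv ℝ 1 u (z + t • v) fun _ => v := by
    filter_upwards [hline.eventually (hu.eventually (by simp))] with t ht
    rw [iteratedFDeriv_one_apply]
    exact (ht.differentiableAt (by simp)).deriv_comp_add_smul
  have hvv : ![v, v] = fun _ => v := by ext i; fin_cases i <;> rfl
  have hu' : ContDiffAt ℝ (1 + 1) u (z + (0 : ℝ) • v) := by rw [zero_smul, add_zero]; exact hu
  rw [hderiv.deriv_eq, hu'.deriv_fderiv_add_smul, hvv, zero_smul, add_zero]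

theorem deriv_deriv_comp_quadratic {g g' : ℝ → ℝ} {g'' S : ℝ}
    (hg : ∀ᶠ s in 𝓝 S, HasDerivAt g (g' s) s) (hg' : HasDerivAt g' g'' S) (a : ℝ) :
    deriv (deriv fun t => g (S + 2 * a * t + t ^ 2)) 0 = 4 * a ^ 2 * g'' + 2 * g' S := by
  have hq (t : ℝ) : HasDerivAt (fun t => S + 2 * a * t + t ^ 2) (2 * a + 2 * t) t := by
    refine ((((hasDerivAt_id' t).const_mul (2 * a)).const_add S).fun_add
      (hasDerivAt_pow 2 t)).congr_deriv ?_
    simp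
  have hqS : Tendsto (fun t => S + 2 * a * t + t ^ 2) (𝓝 0) (𝓝 S) := by
    simpa using (hq 0).continuousAt.tendsto
  have hderiv : deriv (fun t => g (S + 2 * a * t + t ^ 2)) =ᶠ[𝓝 0]
      fun t => g' (S + 2 * a * t + t ^ 2) * (2 * a + 2 * t) := by
    filter_upwards [hqS.eventually hg] with t ht
    exact (ht.comp t (hq t)).deriv
  have hg'q : HasDerivAt (fun t => g' (S + 2 * a * t + t ^ 2)) (g'' * (2 * a + 2 * 0)) 0 :=
    hg'.comp_of_eq 0 (hq 0) (by simp)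
  have hlin : HasDerivAt (fun t : ℝ => 2 * a + 2 * t) 2 0 := by
    simpa using ((hasDerivAt_id' 0).const_mul 2).const_add (2 * a)
  rw [hderiv.deriv_eq, (hg'q.fun_mul hlin).deriv, show S + 2 * a * 0 + (0 : ℝ) ^ 2 = S by ring]
  ring

theorem xnorm_nonneg {n : ℕ} (x : Fin n → ℝ) : 0 ≤ xnorm x := Real.sqrt_nonneg _

theorem xnorm_sq {n : ℕ} (x : Fin n → ℝ) : xnorm x ^ 2 = ∑ i, x i ^ 2 :=
  Real.sq_sqrt (Finset.sum_nonneg fun i _ => sq_nonneg (x i))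

theorem xnorm_sq_pos {n : ℕ} {x : Fin n → ℝ} (hx : x ≠ 0) : 0 < xnorm x ^ 2 := by
  obtain ⟨i, hi⟩ := Function.ne_iff.1 hx
  rw [xnorm_sq]
  exact Finset.sum_pos' (fun j _ => sq_nonneg (x j))
    ⟨i, Finset.mem_univ i, pow_two_pos_of_ne_zero hi⟩

theorem xnorm_rpow {n : ℕ} (x : Fin n → ℝ) (r : ℝ) :
    xnorm x ^ (2 * r) = (xnorm x ^ 2) ^ r := by
  rw [Real.rpow_mul (xnorm_nonneg x), Real.rpow_two]

theorem xnorm_add_smul_single_sq {n : ℕ} (x : Fin n → ℝ) (i : Fin n) (t : ℝ) :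
    xnorm (x + t • Pi.single i 1) ^ 2 = xnorm x ^ 2 + 2 * x i * t + t ^ 2 := by
  simp [xnorm_sq, Pi.single_apply, add_sq, Finset.sum_add_distrib]

theorem contDiff_xnorm_sq {n : ℕ} : ContDiff ℝ ⊤ fun x : Fin n → ℝ => xnorm x ^ 2 := by
  simp only [xnorm_sq]
  fun_prop

theorem sum_deriv_deriv_comp_xnorm_sq {n : ℕ} (x : Fin n → ℝ) {g g' : ℝ → ℝ} {g'' : ℝ}
    (hg : ∀ᶠ s in 𝓝 (xnorm x ^ 2), HasDerivAt g (g' s) s)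
    (hg' : HasDerivAt g' g'' (xnorm x ^ 2)) :
    ∑ i, deriv (deriv fun t : ℝ => g (xnorm (x + t • Pi.single i 1) ^ 2)) 0 =
      4 * xnorm x ^ 2 * g'' + 2 * n * g' (xnorm x ^ 2) := by
  simp only [xnorm_add_smul_single_sq, deriv_deriv_comp_quadratic hg hg', Finset.sum_add_distrib,
    ← Finset.sum_mul, Finset.sum_const, Finset.card_univ, Fintype.card_fin, nsmul_eq_mul]
  rw [← Finset.mul_sum, ← xnorm_sq]
  ring

theorem hasDerivAt_mul_rpow_add_rpow {c p q T s : ℝ} (hs : s ≠ 0) (h : c * s ^ p + T ≠ 0) :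
    HasDerivAt (fun s => (c * s ^ p + T) ^ q)
      (c * p * q * s ^ (p - 1) * (c * s ^ p + T) ^ (q - 1)) s :=
  ((((Real.hasDerivAt_rpow_const (Or.inl hs)).const_mul c).add_const T).rpow_const
    (Or.inl h)).congr_deriv (by ring)

theorem eventually_hasDerivAt_mul_rpow_add_rpow {c p q T S : ℝ} (hS : S ≠ 0)
    (h : c * S ^ p + T ≠ 0) :
    ∀ᶠ s in 𝓝 S, HasDerivAt (fun s => (c * s ^ p + T) ^ q)
      (c * p * q * s ^ (p - 1) * (c * s ^ p + T) ^ (q - 1)) s := by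
  have hcont : ContinuousAt (fun s => c * s ^ p + T) S :=
    (((Real.hasDerivAt_rpow_const (Or.inl hS)).const_mul c).add_const T).continuousAt
  filter_upwards [eventually_ne_nhds hS, hcont.eventually_ne h] with s hs hbase
  exact hasDerivAt_mul_rpow_add_rpow hs hbase

theorem hasDerivAt_deriv_mul_rpow_add_rpow {c p q T s : ℝ} (hs : s ≠ 0)
    (h : c * s ^ p + T ≠ 0) :
    HasDerivAt (fun s => c * p * q * s ^ (p - 1) * (c * s ^ p + T) ^ (q - 1))
      (c * p * q * ((p - 1) * s ^ (p - 2) * (c * s ^ p + T) ^ (q - 1) +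
        c * p * (q - 1) * (s ^ (p - 1)) ^ 2 * (c * s ^ p + T) ^ (q - 2))) s := by
  have h₁ := (Real.hasDerivAt_rpow_const (p := p - 1) (Or.inl hs)).const_mul (c * p * q)
  have h₂ := hasDerivAt_mul_rpow_add_rpow (q := q - 1) hs h
  refine (h₁.fun_mul h₂).congr_deriv ?_
  rw [show p - 1 - 1 = p - 2 by ring, show q - 1 - 1 = q - 2 by ring]
  ring

theorem hasDerivAt_add_rpow {A q t : ℝ} (h : A + t ≠ 0) :
    HasDerivAt (fun t => (A + t) ^ q) (q * (A + t) ^ (q - 1)) t :=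
  (((hasDerivAt_id' t).const_add A).rpow_const (Or.inl h)).congr_deriv (by ring)

theorem eventually_hasDerivAt_add_rpow {A q T : ℝ} (h : A + T ≠ 0) :
    ∀ᶠ t in 𝓝 T, HasDerivAt (fun t => (A + t) ^ q) (q * (A + t) ^ (q - 1)) t := by
  filter_upwards [(continuous_const_add A).continuousAt.eventually_ne h] with t ht
  exact hasDerivAt_add_rpow ht

theorem hasDerivAt_deriv_add_rpow {A q t : ℝ} (h : A + t ≠ 0) :
    HasDerivAt (fun t => q * (A + t) ^ (q - 1)) (q * ((q - 1) * (A + t) ^ (q - 2))) t := by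
  have := (hasDerivAt_add_rpow (q := q - 1) h).const_mul q
  rwa [show q - 1 - 1 = q - 2 by ring] at this

theorem gdist_rpow {N l : ℕ} (γ r : ℝ) (w : GSp N l) :
    gdist γ w ^ r =
      (1 / (1 + γ) ^ 2 * (xnorm w.1 ^ 2) ^ (1 + γ) + xnorm w.2 ^ 2) ^ (r / (2 + 2 * γ)) := by
  have hbase : 0 ≤ 1 / (1 + γ) ^ 2 * xnorm w.1 ^ (2 + 2 * γ) + xnorm w.2 ^ 2 := by
    have := Real.rpow_nonneg (xnorm_nonneg w.1) (2 + 2 * γ)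
    positivity
  rw [gdist, ← Real.rpow_mul hbase, show 2 + 2 * γ = 2 * (1 + γ) by ring, xnorm_rpow]
  ring_nf

theorem contDiffAt_gdist_rpow {N l : ℕ} {γ : ℝ} (hγ : 1 + γ ≠ 0) (r : ℝ)
    {n : WithTop ℕ∞} {z : GSp N l} (hx : z.1 ≠ 0) : ContDiffAt ℝ n (fun w => gdist γ w ^ r) z := by
  have hS := xnorm_sq_pos hx
  have hxsq : ContDiffAt ℝ n (fun w : GSp N l => xnorm w.1 ^ 2) z :=
    (contDiff_xnorm_sq.comp contDiff_fst).contDiffAt.of_le le_top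
  have hysq : ContDiffAt ℝ n (fun w : GSp N l => xnorm w.2 ^ 2) z :=
    (contDiff_xnorm_sq.comp contDiff_snd).contDiffAt.of_le le_top
  simp only [gdist_rpow]
  refine ((contDiffAt_const.mul (hxsq.rpow_const_of_ne hS.ne')).add hysq).rpow_const_of_ne ?_
  have := Real.rpow_pos_of_pos hS (1 + γ)
  positivity

theorem grushin_profile_identity {γ b c q G n m S T : ℝ} (hγ : 1 + γ ≠ 0)
    (hc : c = 1 / (1 + γ) ^ 2) (hq : q = -b / (2 + 2 * γ)) (hG : G = c * S ^ (1 + γ) + T)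
    (hS : 0 < S) (hGpos : 0 < G) :
    4 * S * (c * (1 + γ) * q * ((1 + γ - 1) * S ^ (1 + γ - 2) * G ^ (q - 1) +
        c * (1 + γ) * (q - 1) * (S ^ (1 + γ - 1)) ^ 2 * G ^ (q - 2))) +
      2 * n * (c * (1 + γ) * q * S ^ (1 + γ - 1) * G ^ (q - 1)) +
      S ^ γ * (4 * T * (q * ((q - 1) * G ^ (q - 2))) + 2 * m * (q * G ^ (q - 1))) =
    b * (b - (n + (1 + γ) * m) + 2) * c * S ^ γ * G ^ ((-b - 2 - 2 * γ) / (2 + 2 * γ)) := by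
  have hexp : (-b - 2 - 2 * γ) / (2 + 2 * γ) = q - 1 := by
    rw [hq]
    field_simp
    ring
  have hG2 : G ^ (q - 2) = G ^ (q - 1) / G := by
    rw [← Real.rpow_sub_one hGpos.ne']
    ring_nf
  rw [hexp, hG2, add_sub_cancel_left, show 1 + γ - 2 = γ - 1 by ring, Real.rpow_sub_one hS.ne']
  generalize G ^ (q - 1) = e
  rw [Real.rpow_add hS, Real.rpow_one] at hG
  subst hc hq hG
  have hD : S * S ^ γ + (1 + γ) ^ 2 * T ≠ 0 := by
    convert mul_ne_zero (pow_ne_zero 2 hγ) hGpos.ne' using 1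
    field_simp
  field_simp
  ring

theorem grushin_laplacian_dist_rpow_general {N l : ℕ} (γ b : ℝ) (hγ : 0 < γ)
    (z : GSp N l) (hx : z.1 ≠ 0) :
    grushin γ (fun w => gdist γ w ^ (-b)) z =
      b * (b - Ngamma N l γ + 2) * (1 / (1 + γ) ^ 2) * xnorm z.1 ^ (2 * γ) *
        gdist γ z ^ (-b - 2 - 2 * γ) := by
  set c := 1 / (1 + γ) ^ 2
  set q := -b / (2 + 2 * γ)
  set S := xnorm z.1 ^ 2
  set T := xnorm z.2 ^ 2
  have hS : 0 < S := xnorm_sq_pos hx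
  have hG : 0 < c * S ^ (1 + γ) + T := by
    have := Real.rpow_pos_of_pos hS (1 + γ)
    have : 0 ≤ T := sq_nonneg _
    positivity
  have hsmooth := contDiffAt_gdist_rpow (by linarith : 1 + γ ≠ 0) (-b) (n := 2) hx
  have hxline (i : Fin N) : deriv2 (fun w => gdist γ w ^ (-b)) z (Pi.single i 1, 0) =
      deriv (deriv fun t : ℝ =>
        (c * (xnorm (z.1 + t • Pi.single i 1) ^ 2) ^ (1 + γ) + T) ^ q) 0 := by
    rw [deriv2, iteratedFDeriv_two_apply_self_eq_deriv_deriv hsmooth]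
    simp [gdist_rpow, c, q, T]
  have hyline (j : Fin l) : deriv2 (fun w => gdist γ w ^ (-b)) z (0, Pi.single j 1) =
      deriv (deriv fun t : ℝ =>
        (c * S ^ (1 + γ) + xnorm (z.2 + t • Pi.single j 1) ^ 2) ^ q) 0 := by
    rw [deriv2, iteratedFDeriv_two_apply_self_eq_deriv_deriv hsmooth]
    simp [gdist_rpow, c, q, S]
  rw [grushin, Finset.sum_congr rfl fun i _ => hxline i, Finset.sum_congr rfl fun j _ => hyline j,
    sum_deriv_deriv_comp_xnorm_sq z.1 (eventually_hasDerivAt_mul_rpow_add_rpow hS.ne' hG.ne')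
      (hasDerivAt_deriv_mul_rpow_add_rpow hS.ne' hG.ne'),
    sum_deriv_deriv_comp_xnorm_sq z.2 (eventually_hasDerivAt_add_rpow hG.ne')
      (hasDerivAt_deriv_add_rpow hG.ne'),
    Ngamma, xnorm_rpow, gdist_rpow]
  exact grushin_profile_identity (by linarith) rfl rfl rfl hS hG

/-- the Grushin Laplacian of `φ(z) = d(z,0)^{-b}`. -/
theorem grushin_laplacian_dist_rpow {N l : ℕ} (hNl : 3 ≤ N + l) (γ b : ℝ) (hγ : 0 < γ)
    (z : GSp N l) (hx : z.1 ≠ 0) :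
    grushin γ (fun w => gdist γ w ^ (-b)) z =
      b * (b - Ngamma N l γ + 2) * (1 / (1 + γ) ^ 2) * xnorm z.1 ^ (2 * γ) *
        gdist γ z ^ (-b - 2 - 2 * γ) :=
  grushin_laplacian_dist_rpow_general γ b hγ z hx
end

section
/- Let Ψ(z) = c·e^{-a(d(z,0)-R)} with constants a, c, R > 0 and d the Grushin distance. Then wherever d(z,0) > 0 and x ≠ 0, one has Δ_γ Ψ(z) = a² Ψ(z) (1/(1+γ)²) d(z,0)^{-2γ} |x|^{2γ} − Ψ(z) ((N_γ−1)/(1+γ)²) a d(z,0)^{-1-2γ} |x|^{2γ}, where N_γ = N + (1+γ)l. -/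
open MeasureTheory Filter

/-!
Write `Ψ = g ∘ d` with `g s = c e^{-a(s-R)}`, so `g' = -a g` and `g'' = a² g`. Restricting to lines
through `z` and using the one-variable chain rule gives, for every `C²` profile,
`Δ_γ (g ∘ φ) = g''(φ) |∇_γ φ|² + g'(φ) Δ_γ φ` with `|∇_γ φ|² = |∇_x φ|² + |x|^{2γ} |∇_y φ|²`.
Now `d = ρ^{1/(2+2γ)}` with `ρ = |x|^{2+2γ}/(1+γ)² + |y|²`, which is smooth where `x ≠ 0`, and
`|∇_γ ρ|² = 4 |x|^{2γ} ρ`, `Δ_γ ρ = 2 (N_γ + 2γ) |x|^{2γ}/(1+γ)` by direct computation.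
The chain rule once more gives `|∇_γ d|² = d^{-2γ} |x|^{2γ}/(1+γ)²` and
`Δ_γ d = (N_γ - 1) d^{-1-2γ} |x|^{2γ}/(1+γ)²`.
-/

section SecondDerivative

variable {E F : Type*} [NormedAddCommGroup E] [NormedSpace ℝ E]
  [NormedAddCommGroup F] [NormedSpace ℝ F]

theorem iteratedFDeriv_two_apply_same_eq_iteratedDeriv_line {u : E → F} {z : E}
    (hu : ContDiffAt ℝ 2 u z) (v : E) :
    iteratedFDeriv ℝ 2 u z ![v, v] = iteratedDeriv 2 (fun t : ℝ => u (z + t • v)) 0 := by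
  have hline : ContDiffAt ℝ 2 (fun t : ℝ => z + t • v) 0 := by fun_prop
  have hderiv : deriv (fun t : ℝ => z + t • v) = fun _ => v := by
    funext t
    simpa using ((hasDerivAt_id t).smul_const v).const_add z |>.deriv
  have hderiv2 : iteratedDeriv 2 (fun t : ℝ => z + t • v) 0 = 0 := by
    rw [iteratedDeriv_succ, iteratedDeriv_one, hderiv, deriv_const]
  have h := iteratedDeriv_vcomp_two (by simpa using hu) hline
  simp only [Function.comp_def, zero_smul, add_zero, hderiv, hderiv2, map_zero] at h
  rw [h]
  congr 1
  ext i
  fin_cases i <;> rfl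

theorem iteratedFDeriv_two_comp_apply_same {g : ℝ → ℝ} {φ : E → ℝ} {z : E}
    (hg : ContDiffAt ℝ 2 g (φ z)) (hφ : ContDiffAt ℝ 2 φ z) (v : E) :
    iteratedFDeriv ℝ 2 (g ∘ φ) z ![v, v] =
      iteratedDeriv 2 g (φ z) * fderiv ℝ φ z v ^ 2 +
        deriv g (φ z) * iteratedFDeriv ℝ 2 φ z ![v, v] := by
  have hφ' : ContDiffAt ℝ 2 φ (z + (0 : ℝ) • v) := by simpa using hφ
  have hline : ContDiffAt ℝ 2 (fun t : ℝ => φ (z + t • v)) 0 :=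
    hφ'.comp (f := fun t : ℝ => z + t • v) 0 (by fun_prop)
  have hslope : deriv (fun t : ℝ => φ (z + t • v)) 0 = fderiv ℝ φ z v := by
    have := (hφ'.differentiableAt (by norm_num)).hasFDerivAt.comp_hasDerivAt (0 : ℝ)
      (((hasDerivAt_id (0 : ℝ)).smul_const v).const_add z)
    simpa [Function.comp_def] using this.deriv
  rw [iteratedFDeriv_two_apply_same_eq_iteratedDeriv_line (hg.comp z hφ),
    iteratedFDeriv_two_apply_same_eq_iteratedDeriv_line hφ, ← hslope]
  have := iteratedDeriv_comp_two (x := (0 : ℝ)) (g := g) (by simpa using hg) hline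
  simpa [Function.comp_def] using this

end SecondDerivative

section SumOfSquares

variable {E : Type*} [NormedAddCommGroup E] [NormedSpace ℝ E]

theorem iteratedDeriv_two_quadratic (a b c x : ℝ) :
    iteratedDeriv 2 (fun t => a + b * t + c * t ^ 2) x = 2 * c := by
  have h1 : deriv (fun t => a + b * t + c * t ^ 2) = fun t => b + c * (2 * t) := by
    funext t
    exact (((hasDerivAt_id t).const_mul b).const_add a |>.add
      ((hasDerivAt_pow 2 t).const_mul c)).deriv.trans (by simp)
  have h2 : deriv (fun t => b + c * (2 * t)) x = 2 * c := by
    simp [mul_comm]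
  rw [iteratedDeriv_succ, iteratedDeriv_one, h1, h2]

variable {ι : Type*} [Fintype ι] (L : ι → E →L[ℝ] ℝ)

theorem hasFDerivAt_sum_sq (z : E) :
    HasFDerivAt (fun w => ∑ k, L k w ^ 2) (∑ k, (2 * L k z) • L k) z := by
  refine HasFDerivAt.fun_sum fun k _ => ?_
  simpa [pow_two, two_mul, add_smul] using (L k).hasFDerivAt.fun_mul (L k).hasFDerivAt (x := z)

theorem iteratedFDeriv_two_sum_sq_apply_same (z v : E) :
    iteratedFDeriv ℝ 2 (fun w => ∑ k, L k w ^ 2) z ![v, v] = 2 * ∑ k, L k v ^ 2 := by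
  rw [iteratedFDeriv_two_apply_same_eq_iteratedDeriv_line (by fun_prop)]
  have hline : (fun t : ℝ => ∑ k, L k (z + t • v) ^ 2) = fun t =>
      (∑ k, L k z ^ 2) + (∑ k, 2 * L k z * L k v) * t + (∑ k, L k v ^ 2) * t ^ 2 := by
    funext t
    simp only [map_add, map_smul, smul_eq_mul, Finset.sum_mul, ← Finset.sum_add_distrib]
    exact Finset.sum_congr rfl fun k _ => by ring
  rw [hline, iteratedDeriv_two_quadratic]

end SumOfSquares

theorem iteratedDeriv_two_rpow_const (p x : ℝ) :
    iteratedDeriv 2 (fun s => s ^ p) x = p * (p - 1) * x ^ (p - 2) := by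
  rw [iteratedDeriv_eq_iterate, Real.iter_deriv_rpow_const]
  simp [descPochhammer_succ_right]

theorem xnorm_rpow_two_mul {n : ℕ} (x : Fin n → ℝ) (p : ℝ) :
    xnorm x ^ (2 * p) = (∑ i, x i ^ 2) ^ p := by
  rw [xnorm, Real.sqrt_eq_rpow, ← Real.rpow_mul (Finset.sum_nonneg fun i _ => sq_nonneg _)]
  ring_nf

namespace Grushin

variable {N l : ℕ} {γ : ℝ}

noncomputable def gradSq (γ : ℝ) (u : GSp N l → ℝ) (z : GSp N l) : ℝ :=
  (∑ i, fderiv ℝ u z (Pi.single i 1, 0) ^ 2) +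
    xnorm z.1 ^ (2 * γ) * ∑ j, fderiv ℝ u z (0, Pi.single j 1) ^ 2

theorem grushin_add {u v : GSp N l → ℝ} {z : GSp N l} (hu : ContDiffAt ℝ 2 u z)
    (hv : ContDiffAt ℝ 2 v z) : grushin γ (u + v) z = grushin γ u z + grushin γ v z := by
  simp only [grushin, deriv2, iteratedFDeriv_add_apply hu hv, add_apply,
    Finset.sum_add_distrib]
  ring

theorem grushin_comp {g : ℝ → ℝ} {φ : GSp N l → ℝ} {z : GSp N l}
    (hg : ContDiffAt ℝ 2 g (φ z)) (hφ : ContDiffAt ℝ 2 φ z) :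
    grushin γ (g ∘ φ) z =
      iteratedDeriv 2 g (φ z) * gradSq γ φ z + deriv g (φ z) * grushin γ φ z := by
  simp only [grushin, gradSq, deriv2, iteratedFDeriv_two_comp_apply_same hg hφ,
    Finset.sum_add_distrib, ← Finset.mul_sum]
  ring

theorem gradSq_comp {g : ℝ → ℝ} {φ : GSp N l → ℝ} {z : GSp N l}
    (hg : DifferentiableAt ℝ g (φ z)) (hφ : DifferentiableAt ℝ φ z) :
    gradSq γ (g ∘ φ) z = deriv g (φ z) ^ 2 * gradSq γ φ z := by
  have h : fderiv ℝ (g ∘ φ) z = deriv g (φ z) • fderiv ℝ φ z :=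
    (hg.hasDerivAt.comp_hasFDerivAt z hφ.hasFDerivAt).fderiv
  simp only [gradSq, h, smul_apply, smul_eq_mul, mul_pow, ← Finset.mul_sum]
  ring

noncomputable def sqX (w : GSp N l) : ℝ := ∑ i, w.1 i ^ 2

noncomputable def sqY (w : GSp N l) : ℝ := ∑ j, w.2 j ^ 2

theorem sqX_eq_sum_sq : (sqX : GSp N l → ℝ) = fun w =>
    ∑ i, (ContinuousLinearMap.proj i ∘L ContinuousLinearMap.fst ℝ _ (Fin l → ℝ)) w ^ 2 :=
  rfl

theorem sqY_eq_sum_sq : (sqY : GSp N l → ℝ) = fun w =>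
    ∑ j, (ContinuousLinearMap.proj j ∘L ContinuousLinearMap.snd ℝ (Fin N → ℝ) _) w ^ 2 :=
  rfl

theorem contDiff_sqX {n : WithTop ℕ∞} : ContDiff ℝ n (sqX : GSp N l → ℝ) := by
  unfold sqX; fun_prop

theorem contDiff_sqY {n : WithTop ℕ∞} : ContDiff ℝ n (sqY : GSp N l → ℝ) := by
  unfold sqY; fun_prop

theorem fderiv_sqX_apply (z v : GSp N l) : fderiv ℝ sqX z v = 2 * ∑ i, z.1 i * v.1 i := by
  rw [sqX_eq_sum_sq, (hasFDerivAt_sum_sq _ z).fderiv]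
  simp [Finset.mul_sum, mul_assoc]

theorem fderiv_sqY_apply (z v : GSp N l) : fderiv ℝ sqY z v = 2 * ∑ j, z.2 j * v.2 j := by
  rw [sqY_eq_sum_sq, (hasFDerivAt_sum_sq _ z).fderiv]
  simp [Finset.mul_sum, mul_assoc]

theorem deriv2_sqX (z v : GSp N l) : deriv2 sqX z v = 2 * sqX v := by
  rw [deriv2, sqX_eq_sum_sq, iteratedFDeriv_two_sum_sq_apply_same]

theorem deriv2_sqY (z v : GSp N l) : deriv2 sqY z v = 2 * sqY v := by
  rw [deriv2, sqY_eq_sum_sq, iteratedFDeriv_two_sum_sq_apply_same]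

theorem xnorm_rpow_two_mul_eq_sqX (w : GSp N l) (p : ℝ) : xnorm w.1 ^ (2 * p) = sqX w ^ p :=
  xnorm_rpow_two_mul w.1 p

theorem gradSq_sqX (z : GSp N l) : gradSq γ sqX z = 4 * sqX z := by
  norm_num [gradSq, fderiv_sqX_apply, Pi.single_apply, mul_pow, sqX, Finset.mul_sum]

theorem grushin_sqX (z : GSp N l) : grushin γ sqX z = 2 * N := by
  simp [grushin, deriv2_sqX, sqX, Pi.single_apply, mul_comm]

theorem grushin_sqY (z : GSp N l) : grushin γ sqY z = 2 * l * sqX z ^ γ := by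
  rw [grushin, xnorm_rpow_two_mul_eq_sqX]
  simp [deriv2_sqY, sqY, Pi.single_apply, mul_comm]

theorem sqX_pos {z : GSp N l} (hx : z.1 ≠ 0) : 0 < sqX z := by
  obtain ⟨i, hi⟩ := Function.ne_iff.1 hx
  exact Finset.sum_pos' (fun _ _ => sq_nonneg _)
    ⟨i, Finset.mem_univ i, pow_two_pos_of_ne_zero hi⟩

noncomputable def rho (γ : ℝ) (w : GSp N l) : ℝ := 1 / (1 + γ) ^ 2 * sqX w ^ (1 + γ) + sqY w

theorem rho_pos (hγ : 1 + γ ≠ 0) {z : GSp N l} (hS : 0 < sqX z) : 0 < rho γ z :=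
  add_pos_of_pos_of_nonneg
    (mul_pos (one_div_pos.2 (pow_two_pos_of_ne_zero hγ)) (Real.rpow_pos_of_pos hS _))
    (Finset.sum_nonneg fun _ _ => sq_nonneg _)

theorem gdist_eq_rpow_rho (γ : ℝ) :
    (gdist γ : GSp N l → ℝ) = fun w => rho γ w ^ (1 / (2 + 2 * γ)) := by
  funext w
  rw [gdist, show 2 + 2 * γ = 2 * (1 + γ) by ring, xnorm_rpow_two_mul_eq_sqX, xnorm,
    Real.sq_sqrt (Finset.sum_nonneg fun _ _ => sq_nonneg _)]
  rfl

theorem contDiffAt_rho {z : GSp N l} (hS : 0 < sqX z) : ContDiffAt ℝ 2 (rho γ) z := by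
  have h : ContDiffAt ℝ 2 (fun w => sqX w ^ (1 + γ)) z :=
    (Real.contDiffAt_rpow_const_of_ne hS.ne').comp z contDiff_sqX.contDiffAt
  exact (contDiffAt_const.mul h).add contDiff_sqY.contDiffAt

theorem fderiv_rho_apply (hγ : 1 + γ ≠ 0) {z : GSp N l} (hS : 0 < sqX z) (v : GSp N l) :
    fderiv ℝ (rho γ) z v =
      sqX z ^ γ / (1 + γ) * fderiv ℝ sqX z v + fderiv ℝ sqY z v := by
  have hX : HasFDerivAt (sqX : GSp N l → ℝ) (fderiv ℝ sqX z) z :=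
    ((contDiff_sqX (n := 1)).differentiable one_ne_zero z).hasFDerivAt
  have hY : HasFDerivAt (sqY : GSp N l → ℝ) (fderiv ℝ sqY z) z :=
    ((contDiff_sqY (n := 1)).differentiable one_ne_zero z).hasFDerivAt
  have h : HasFDerivAt (rho γ) _ z :=
    ((hX.rpow_const (p := 1 + γ) (Or.inl hS.ne')).const_mul (1 / (1 + γ) ^ 2)).fun_add hY
  rw [h.fderiv]
  simp only [add_apply, smul_apply, smul_eq_mul, add_sub_cancel_left]
  field_simp

theorem gradSq_rho (hγ : 1 + γ ≠ 0) {z : GSp N l} (hS : 0 < sqX z) :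
    gradSq γ (rho γ) z = 4 * sqX z ^ γ * rho γ z := by
  simp only [gradSq, fderiv_rho_apply hγ hS, fderiv_sqX_apply, fderiv_sqY_apply,
    Pi.single_apply, mul_ite, mul_one, mul_zero, Finset.sum_ite_eq', Finset.mem_univ, if_true,
    Pi.zero_apply, Finset.sum_const_zero, add_zero, zero_add]
  rw [xnorm_rpow_two_mul_eq_sqX, rho, Real.rpow_add hS, Real.rpow_one]
  simp only [mul_pow, ← Finset.mul_sum, ← sqX.eq_1, ← sqY.eq_1]
  field_simp
  ring

theorem grushin_rho (hγ : 1 + γ ≠ 0) {z : GSp N l} (hS : 0 < sqX z) :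
    grushin γ (rho γ) z = 2 * (Ngamma N l γ + 2 * γ) / (1 + γ) * sqX z ^ γ := by
  have hsplit : (rho γ : GSp N l → ℝ) =
      (fun s => 1 / (1 + γ) ^ 2 * s ^ (1 + γ)) ∘ sqX + sqY := rfl
  have hpow : ContDiffAt ℝ 2 (fun s => 1 / (1 + γ) ^ 2 * s ^ (1 + γ)) (sqX z) :=
    contDiffAt_const.mul (Real.contDiffAt_rpow_const_of_ne hS.ne')
  rw [hsplit, grushin_add (hpow.comp z contDiff_sqX.contDiffAt) contDiff_sqY.contDiffAt,
    grushin_comp hpow contDiff_sqX.contDiffAt,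
    iteratedDeriv_const_mul _ (Real.contDiffAt_rpow_const_of_ne hS.ne'),
    iteratedDeriv_two_rpow_const, deriv_const_mul_field, Real.deriv_rpow_const,
    gradSq_sqX, grushin_sqX, grushin_sqY, show 1 + γ - 2 = γ - 1 by ring,
    Real.rpow_sub_one hS.ne', add_sub_cancel_left, Ngamma]
  field_simp
  ring

theorem contDiffAt_gdist (hγ : 1 + γ ≠ 0) {z : GSp N l} (hx : z.1 ≠ 0) :
    ContDiffAt ℝ 2 (gdist γ) z := by
  rw [gdist_eq_rpow_rho]
  exact (Real.contDiffAt_rpow_const_of_ne (rho_pos hγ (sqX_pos hx)).ne').comp z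
    (contDiffAt_rho (sqX_pos hx))

theorem gradSq_gdist (hγ : 1 + γ ≠ 0) {z : GSp N l} (hx : z.1 ≠ 0) :
    gradSq γ (gdist γ) z =
      1 / (1 + γ) ^ 2 * gdist γ z ^ (-(2 * γ)) * xnorm z.1 ^ (2 * γ) := by
  have hS := sqX_pos hx
  have hρ := rho_pos hγ hS
  have hexp : (rho γ z ^ (1 / (2 + 2 * γ) - 1)) ^ 2 * rho γ z =
      (rho γ z ^ (1 / (2 + 2 * γ))) ^ (-(2 * γ)) := by
    rw [← Real.rpow_natCast, ← Real.rpow_mul hρ.le, ← Real.rpow_add_one hρ.ne',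
      ← Real.rpow_mul hρ.le]
    congr 1
    field_simp
    ring
  rw [gdist_eq_rpow_rho]
  change gradSq γ ((fun s => s ^ (1 / (2 + 2 * γ))) ∘ rho γ) z = _
  rw [gradSq_comp (Real.differentiableAt_rpow_const_of_ne _ hρ.ne')
    ((contDiffAt_rho hS).differentiableAt two_ne_zero), Real.deriv_rpow_const,
    gradSq_rho hγ hS, xnorm_rpow_two_mul_eq_sqX, ← hexp]
  field_simp
  ring

theorem grushin_gdist (hγ : 1 + γ ≠ 0) {z : GSp N l} (hx : z.1 ≠ 0) :
    grushin γ (gdist γ) z =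
      (Ngamma N l γ - 1) / (1 + γ) ^ 2 * gdist γ z ^ (-1 - 2 * γ) * xnorm z.1 ^ (2 * γ) := by
  have hS := sqX_pos hx
  have hρ := rho_pos hγ hS
  have hexp :
      (rho γ z ^ (1 / (2 + 2 * γ))) ^ (-1 - 2 * γ) = rho γ z ^ (1 / (2 + 2 * γ) - 1) := by
    rw [← Real.rpow_mul hρ.le]
    congr 1
    field_simp
    ring
  rw [gdist_eq_rpow_rho]
  change grushin γ ((fun s => s ^ (1 / (2 + 2 * γ))) ∘ rho γ) z = _
  rw [grushin_comp (Real.contDiffAt_rpow_const_of_ne hρ.ne') (contDiffAt_rho hS),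
    iteratedDeriv_two_rpow_const, Real.deriv_rpow_const, gradSq_rho hγ hS, grushin_rho hγ hS,
    xnorm_rpow_two_mul_eq_sqX, hexp, show 1 / (2 + 2 * γ) - 2 = 1 / (2 + 2 * γ) - 1 - 1 by ring,
    Real.rpow_sub_one hρ.ne', Ngamma]
  field_simp
  ring

end Grushin

theorem deriv_exp_decay (a c R : ℝ) :
    deriv (fun s => c * Real.exp (-a * (s - R))) =
      fun s => -a * (c * Real.exp (-a * (s - R))) := by
  funext s
  convert ((((hasDerivAt_id' s).sub_const R).const_mul (-a)).exp.const_mul c).deriv using 1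
  ring

theorem iteratedDeriv_two_exp_decay (a c R s : ℝ) :
    iteratedDeriv 2 (fun s => c * Real.exp (-a * (s - R))) s =
      a ^ 2 * (c * Real.exp (-a * (s - R))) := by
  rw [iteratedDeriv_succ, iteratedDeriv_one, deriv_exp_decay, deriv_const_mul_field,
    deriv_exp_decay]
  ring

theorem grushin_laplacian_barrier_general {N l : ℕ} (γ a c R : ℝ) (hγ : 0 < γ)
    (z : GSp N l) (hx : z.1 ≠ 0) :
    grushin γ (fun w => c * Real.exp (-a * (gdist γ w - R))) z =
      a ^ 2 * (c * Real.exp (-a * (gdist γ z - R))) * (1 / (1 + γ) ^ 2) *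
          gdist γ z ^ (-(2 * γ)) * xnorm z.1 ^ (2 * γ) -
        (c * Real.exp (-a * (gdist γ z - R))) * ((Ngamma N l γ - 1) / (1 + γ) ^ 2) * a *
          gdist γ z ^ (-1 - 2 * γ) * xnorm z.1 ^ (2 * γ) := by
  have h1γ : 1 + γ ≠ 0 := by positivity
  have hprofile : ContDiffAt ℝ 2 (fun s => c * Real.exp (-a * (s - R))) (gdist γ z) := by
    fun_prop
  change grushin γ ((fun s => c * Real.exp (-a * (s - R))) ∘ gdist γ) z = _
  rw [Grushin.grushin_comp hprofile (Grushin.contDiffAt_gdist h1γ hx),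
    iteratedDeriv_two_exp_decay, deriv_exp_decay, Grushin.gradSq_gdist h1γ hx,
    Grushin.grushin_gdist h1γ hx]
  ring

/-- the Grushin Laplacian of the barrier `Ψ(z) = c e^{-a(d(z,0)-R)}`. -/
theorem grushin_laplacian_barrier {N l : ℕ} (hNl : 3 ≤ N + l) (γ a c R : ℝ) (hγ : 0 < γ)
    (ha : 0 < a) (hc : 0 < c) (hR : 0 < R)
    (z : GSp N l) (hz : 0 < gdist γ z) (hx : z.1 ≠ 0) :
    grushin γ (fun w => c * Real.exp (-a * (gdist γ w - R))) z =
      a ^ 2 * (c * Real.exp (-a * (gdist γ z - R))) * (1 / (1 + γ) ^ 2) *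
          gdist γ z ^ (-(2 * γ)) * xnorm z.1 ^ (2 * γ) -
        (c * Real.exp (-a * (gdist γ z - R))) * ((Ngamma N l γ - 1) / (1 + γ) ^ 2) * a *
          gdist γ z ^ (-1 - 2 * γ) * xnorm z.1 ^ (2 * γ) :=
  grushin_laplacian_barrier_general γ a c R hγ z hx
end
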